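/- Let ε ∈ {1,2}^{p−1} and take δ = (0,…,0), so in the kernel L^ε_δ all p of the z-contours are circles about the origin with radii ρ_1, …, ρ_p ∈ (τ_1, 1−√q) ordered according to ε. If ε is not equal to ε^k = (2,…,2,1,…,1) (with k−1 entries equal to 2) for any 1 ≤ k ≤ p — equivalently, if there is no 1 ≤ k ≤ p with ρ_1 < ρ_2 < … < ρ_k and ρ_k > ρ_{k+1} > … > ρ_p — then L^ε_δ(i,j) = 0 for all 1 ≤ i, j ≤ N. -/

import Mathlib

open MeasureTheory ProbabilityTheory Complex
open scoped Real BigOperators Nat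

noncomputable section

/-- Forward difference operator `∇f(x) = f(x+1) − f(x)`. -/
def nab (f : ℤ → ℂ) : ℤ → ℂ := fun x => f (x + 1) - f x

/-- Inverse difference: `∇⁻¹f(x) = ∑_{y<x} f(y)` (a `tsum`; for functions vanishing
to the left of some integer this is the finite sum of the paper). -/
def nabInv (f : ℤ → ℂ) : ℤ → ℂ := fun x => ∑' y : {y : ℤ // y < x}, f y.1

/-- `∇^k` for `k : ℤ`. -/
def nabIter (k : ℤ) (f : ℤ → ℂ) : ℤ → ℂ :=
  if 0 ≤ k then nab^[k.toNat] f else nabInv^[(-k).toNat] f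

/-- The negative binomial weight `w_m(x)`. -/
def wgt (q : ℝ) (m : ℕ) : ℤ → ℂ := fun x =>
  if 0 ≤ x then ((x.toNat + m - 1).choose x.toNat : ℂ) * ((1 : ℂ) - (q : ℂ)) ^ m * (q : ℂ) ^ x
  else 0

/-- Component `x_k` (1-based) of a vector `x : Fin N → ℤ`. -/
def vcomp {N : ℕ} (x : Fin N → ℤ) (k : ℕ) : ℤ :=
  if h : k - 1 < N then x ⟨k - 1, h⟩ else 0

/-- 1-based access to a finite tuple, extended by `0` out of range. -/
def fext {d : ℕ} {α : Type*} [Zero α] (x : Fin d → α) : ℕ → α := fun k =>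
  if h : 1 ≤ k ∧ k ≤ d then x ⟨k - 1, by omega⟩ else 0

/-- The growth function `𝐆(m,n)` built from weights `w`. -/
def growth (w : ℕ → ℕ → ℕ) : ℕ → ℕ → ℕ
  | 0, _ => 0
  | _ + 1, 0 => 0
  | m + 1, n + 1 => max (growth w m (n + 1)) (growth w (m + 1) n) + w (m + 1) (n + 1)
  termination_by m n => m + n

/-- Normalized contour integral `(1/(2πi)) ∮_{|z−c|=R} f(z) dz` (counterclockwise circle). -/
def cint (c : ℂ) (R : ℝ) (f : ℂ → ℂ) : ℂ :=
  (2 * Real.pi * Complex.I)⁻¹ * (∮ z in C(c, R), f z)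

/-- Iterated normalized contour integrals with centers `c` and radii `R`. -/
def multiCintC : (k : ℕ) → (c : Fin k → ℂ) → (R : Fin k → ℝ) → ((Fin k → ℂ) → ℂ) → ℂ
  | 0, _, _, f => f ![]
  | k + 1, c, R, f =>
      cint (c 0) (R 0) fun z =>
        multiCintC k (fun t => c t.succ) (fun t => R t.succ) fun w => f (Fin.cons z w)

/-- `G*(w | n, m, a)`. -/
def Gstar (q : ℝ) (n m a : ℤ) (w : ℂ) : ℂ :=
  w ^ n * (1 - w) ^ (a + m) / (1 - w / (1 - (q : ℂ))) ^ m

/-- `G(w | n, m, a) = G*(w | n,m,a)/G*(1−√q | n,m,a)`. -/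
def Gfun (q : ℝ) (n m a : ℤ) (w : ℂ) : ℂ :=
  Gstar q n m a w / Gstar q n m a (1 - (Real.sqrt q : ℂ))

/-- The block index `r` such that `n_{r−1} < i ≤ n_r`. -/
def blockIdx (n : ℕ → ℕ) (i : ℕ) : ℕ := sInf {r : ℕ | i ≤ n r}

/-- `r* = min{r, p−1}` for the block of `i`. -/
def rstar (p : ℕ) (n : ℕ → ℕ) (i : ℕ) : ℕ := min (blockIdx n i) (p - 1)

/-- `m(i) = m_{r*}`. -/
def mOf (p : ℕ) (n m : ℕ → ℕ) (i : ℕ) : ℕ := m (rstar p n i)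

/-- `a(i) = a_{r*}`. -/
def aOf (p : ℕ) (n : ℕ → ℕ) (a : ℕ → ℤ) (i : ℕ) : ℤ := a (rstar p n i)

/-- `n(i) = n_{r*}`. -/
def nOf (p : ℕ) (n : ℕ → ℕ) (i : ℕ) : ℕ := n (rstar p n i)


/-- The kernel `L^ε_δ(i,j)`: a `(p+2)`-fold contour integral where the `z_k`-contour
is the circle `C_k` of radius `ρ_k` centered at `1` if `δ_k = 1` and at `0` if `δ_k = 0`. -/
def Ldelta (q : ℝ) (p : ℕ) (n m : ℕ → ℕ) (a : ℕ → ℤ) (τ1 τ2 : ℝ)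
    (δ : ℕ → ℕ) (ρ : ℕ → ℝ) (i j : ℕ) : ℂ :=
  cint 0 τ1 (fun ζ1 => cint 0 τ2 (fun ζ2 =>
    multiCintC p (fun t => if δ (t.1 + 1) = 1 then 1 else 0) (fun t => ρ (t.1 + 1))
      (fun zv =>
        ((∏ k ∈ Finset.Icc 1 p,
            Gfun q ((n k : ℤ) - n (k - 1)) ((m k : ℤ) - m (k - 1)) (a k - a (k - 1))
              (fext zv k))
          * (∏ k ∈ Finset.Icc 1 (p - 1), (fext zv k - fext zv (k + 1))⁻¹)
          * ((1 - ζ1) / (1 - fext zv 1)))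
        / (Gfun q (i : ℤ) (mOf p n m i : ℤ) (aOf p n a i) ζ1
           * Gfun q ((n p : ℤ) - j + 1) ((m p : ℤ) - mOf p n m j) (a p - aOf p n a j) ζ2
           * ((fext zv 1 - ζ1) * (fext zv p - ζ2))))))

/-!
Since `ε` is not of the form `(2,…,2,1,…,1)`, some `k` has `ε_k = 1` and `ε_{k+1} = 2`, i.e.
`ρ_k > ρ_{k+1} < ρ_{k+2}`. Fix `z_1, …, z_k` and look at the `z_{k+1}`-integral. After the
integrations over `z_{k+2}, …, z_p` are carried out, its integrand is
`G(z_{k+1}) (z_k - z_{k+1})⁻¹ ∮ (z_{k+1} - z_{k+2})⁻¹ H(z_{k+2}) dz_{k+2}`, where the Cauchy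
integral is holomorphic for `|z_{k+1}| < ρ_{k+2}`, the pole `z_k` lies outside the circle
`|z_{k+1}| = ρ_{k+1}`, and `G` is holomorphic on `|w| < 1 - √q` because `Δ_{k+1} n ≥ 0`.
By Cauchy's theorem the `z_{k+1}`-integral vanishes.
-/

open Metric

section ContourIntegrals

variable {c : ℂ} {R : ℝ}

theorem cint_congr (hR : 0 ≤ R) {f g : ℂ → ℂ} (h : Set.EqOn f g (sphere c R)) :
    cint c R f = cint c R g := by
  rw [cint, cint, circleIntegral.integral_congr hR h]

theorem cint_zero : cint c R (fun _ => 0) = 0 := by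
  simp [cint, circleIntegral]

theorem cint_eq_zero_of_eqOn_zero (hR : 0 ≤ R) {f : ℂ → ℂ} (h : ∀ z ∈ sphere c R, f z = 0) :
    cint c R f = 0 := by
  rw [cint_congr hR (g := fun _ => 0) h, cint_zero]

theorem cint_const_mul (a : ℂ) (f : ℂ → ℂ) : cint c R (fun z => a * f z) = a * cint c R f := by
  rw [cint, cint, circleIntegral.integral_const_mul]
  ring

theorem cint_eq_zero_of_differentiableOn (hR : 0 ≤ R) {f : ℂ → ℂ}
    (hf : DifferentiableOn ℂ f (closedBall c R)) : cint c R f = 0 := by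
  rw [cint, circleIntegral_eq_zero_of_differentiable_on_off_countable hR Set.countable_empty
    hf.continuousOn fun z hz => hf.differentiableAt (closedBall_mem_nhds_of_mem hz.1), mul_zero]

theorem differentiableOn_cint_sub_inv_mul (hR : 0 < R) {H : ℂ → ℂ} (hH : CircleIntegrable H c R) :
    DifferentiableOn ℂ (fun z => cint c R fun w => (z - w)⁻¹ * H w) (ball c R) := by
  have hcauchy := (hasFPowerSeriesOn_cauchy_integral (R := ⟨R, hR.le⟩) hH hR).differentiableOn
  refine (hcauchy.mono Metric.eball_coe.ge).neg.congr fun z _ => ?_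
  have hsub : (fun w => (z - w)⁻¹ * H w) = fun w => -1 * ((w - z)⁻¹ * H w) := by
    funext w
    rw [← neg_sub w z, inv_neg]
    ring
  rw [hsub, cint_const_mul, Pi.neg_apply, neg_one_mul]
  rfl

/-- The inner Cauchy integral is holomorphic inside the circle of radius `r'`, so the whole
integrand is holomorphic on the closed disc of radius `r`. -/
theorem cint_inv_sub_mul_cint_eq_zero {r r' : ℝ} {A : ℂ} {g H : ℂ → ℂ} (hr : 0 ≤ r)
    (hrr' : r < r') (hA : A ∉ closedBall c r) (hg : DifferentiableOn ℂ g (closedBall c r))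
    (hH : CircleIntegrable H c r') :
    cint c r (fun z => (A - z)⁻¹ * g z * cint c r' fun w => (z - w)⁻¹ * H w) = 0 := by
  refine cint_eq_zero_of_differentiableOn hr ((DifferentiableOn.mul ?_ hg).mul ?_)
  · exact ((differentiableOn_const A).sub differentiableOn_id).inv
      fun z hz => sub_ne_zero.2 fun h => hA (by rwa [show A = z from h])
  · exact (differentiableOn_cint_sub_inv_mul (hr.trans_lt hrr') hH).mono
      (closedBall_subset_ball hrr')

theorem continuous_cint {X : Type*} [TopologicalSpace X] {f : X → ℂ → ℂ}
    (hf : Continuous fun x : X × ℝ => f x.1 (circleMap c R x.2)) :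
    Continuous fun x => cint c R (f x) := by
  simp only [cint, circleIntegral, deriv_circleMap]
  refine continuous_const.mul
    (intervalIntegral.continuous_parametric_intervalIntegral_of_continuous' ?_ _ _)
  exact ((continuous_circleMap 0 R).comp continuous_snd |>.mul continuous_const).smul hf

end ContourIntegrals

theorem multiCintC_const_mul : ∀ (k : ℕ) (c : Fin k → ℂ) (R : Fin k → ℝ) (a : ℂ)
    (f : (Fin k → ℂ) → ℂ), multiCintC k c R (fun v => a * f v) = a * multiCintC k c R f
  | 0, _, _, _, _ => rfl
  | k + 1, c, R, a, f => by
    simp only [multiCintC, multiCintC_const_mul k, cint_const_mul]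

/-- `chainKernel g B len A w = (A - w₀)⁻¹ g₀(w₀) (w₀ - w₁)⁻¹ g₁(w₁) ⋯ g_{len-1}(w_{len-1})
(w_{len-1} - B)⁻¹`, the shape of the integrand of `Ldelta` once the leading variables are fixed. -/
def chainKernel (g : ℕ → ℂ → ℂ) (B : ℂ) : (len : ℕ) → ℂ → (Fin len → ℂ) → ℂ
  | 0, A, _ => (A - B)⁻¹
  | len + 1, A, w =>
    (A - w 0)⁻¹ * g 0 (w 0) * chainKernel (fun k => g (k + 1)) B len (w 0) (Fin.tail w)

theorem multiCintC_chainKernel_succ (g : ℕ → ℂ → ℂ) (B : ℂ) (len : ℕ) (r : ℕ → ℝ) (A : ℂ) :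
    multiCintC (len + 1) (fun _ => 0) (fun k => r (k.1 + 1)) (chainKernel g B (len + 1) A) =
      cint 0 (r 1) fun z => (A - z)⁻¹ * g 0 z *
        multiCintC len (fun _ => 0) (fun k => r (k.1 + 1 + 1))
          (chainKernel (fun k => g (k + 1)) B len z) := by
  simp only [multiCintC, ← multiCintC_const_mul]
  rfl

theorem continuousOn_multiCintC_chainKernel (B : ℂ) (len : ℕ) (g : ℕ → ℂ → ℂ) (r : ℕ → ℝ)
    (hr : ∀ k < len, 0 ≤ r (k + 1)) (hadj : ∀ k < len, r k ≠ r (k + 1)) (hB : r len ≠ ‖B‖)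
    (hg : ∀ k < len, ContinuousOn (g k) (sphere 0 (r (k + 1)))) :
    ContinuousOn (fun A => multiCintC len (fun _ => 0) (fun k => r (k.1 + 1))
      (chainKernel g B len A)) (sphere 0 (r 0)) := by
  induction len generalizing g r with
  | zero =>
    refine (continuousOn_id.sub continuousOn_const).inv₀ fun A hA => sub_ne_zero.2 ?_
    rintro rfl
    exact hB (mem_sphere_zero_iff_norm.1 hA).symm
  | succ len ih =>
    have hM := ih (fun k => g (k + 1)) (fun k => r (k + 1)) (fun k hk => hr (k + 1) (by omega))
      (fun k hk => hadj (k + 1) (by omega)) hB (fun k hk => hg (k + 1) (by omega))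
    have hz : ∀ θ, circleMap 0 (r 1) θ ∈ sphere (0 : ℂ) (r 1) :=
      circleMap_mem_sphere 0 (hr 0 (by omega))
    simp only [multiCintC_chainKernel_succ]
    rw [continuousOn_iff_continuous_domRestrict]
    refine continuous_cint (Continuous.mul (Continuous.mul ?_ ?_) ?_)
    · refine (continuous_subtype_val.comp continuous_fst |>.sub
        ((continuous_circleMap 0 _).comp continuous_snd)).inv₀ fun x => sub_ne_zero.2 fun h => ?_
      refine hadj 0 (by omega) ?_
      rw [← mem_sphere_zero_iff_norm.1 x.1.2, ← mem_sphere_zero_iff_norm.1 (hz x.2)]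
      exact congrArg norm h
    · exact ((hg 0 (by omega)).comp_continuous (continuous_circleMap 0 _) hz).comp continuous_snd
    · exact (hM.comp_continuous (continuous_circleMap 0 _) hz).comp continuous_snd

theorem multiCintC_chainKernel_eq_zero (B : ℂ) (s len : ℕ) (g : ℕ → ℂ → ℂ) (r : ℕ → ℝ) (A : ℂ)
    (hlen : s + 2 ≤ len) (hA : ‖A‖ = r 0) (hdesc : r (s + 1) < r s) (hasc : r (s + 1) < r (s + 2))
    (hr : ∀ k < len, 0 ≤ r (k + 1)) (hadj : ∀ k < len, r k ≠ r (k + 1)) (hB : r len ≠ ‖B‖)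
    (hg : ∀ k < len, ContinuousOn (g k) (sphere 0 (r (k + 1))))
    (hgs : DifferentiableOn ℂ (g s) (closedBall 0 (r (s + 1)))) :
    multiCintC len (fun _ => 0) (fun k => r (k.1 + 1)) (chainKernel g B len A) = 0 := by
  induction s generalizing len g r A with
  | zero =>
    obtain ⟨len, rfl⟩ : ∃ l, len = l + 2 := ⟨len - 2, by omega⟩
    have hM := continuousOn_multiCintC_chainKernel B len (fun k => g (k + 2))
      (fun k => r (k + 2)) (fun k hk => hr (k + 2) (by omega))
      (fun k hk => hadj (k + 2) (by omega)) hB (fun k hk => hg (k + 2) (by omega))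
    have hH : CircleIntegrable (fun w => g 1 w * multiCintC len (fun _ => 0)
        (fun k => r (k.1 + 1 + 2)) (chainKernel (fun k => g (k + 2)) B len w)) 0 (r 2) :=
      ((hg 1 (by omega)).mul hM).circleIntegrable (hr 1 (by omega))
    have hAout : A ∉ closedBall 0 (r 1) := by simpa [hA] using hdesc
    have key := cint_inv_sub_mul_cint_eq_zero (hr 0 (by omega)) hasc hAout hgs hH
    simp only [multiCintC_chainKernel_succ,
      multiCintC_chainKernel_succ _ _ _ (fun j => r (j + 1)), mul_assoc] at key ⊢
    exact key
  | succ s ih =>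
    obtain ⟨len, rfl⟩ : ∃ l, len = l + 1 := ⟨len - 1, by omega⟩
    rw [multiCintC_chainKernel_succ]
    refine cint_eq_zero_of_eqOn_zero (hr 0 (by omega)) fun z hz => ?_
    rw [ih len (fun k => g (k + 1)) (fun k => r (k + 1)) z (by omega)
      (mem_sphere_zero_iff_norm.1 hz) hdesc hasc (fun k hk => hr (k + 1) (by omega))
      (fun k hk => hadj (k + 1) (by omega)) hB (fun k hk => hg (k + 1) (by omega)) hgs, mul_zero]

theorem prod_mul_prod_inv_sub_eq_chainKernel (G : ℕ → ℂ → ℂ) (B : ℂ) :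
    ∀ (len : ℕ) (z : Fin (len + 1) → ℂ),
      (∏ i, G i.1 (z i)) * (∏ i : Fin len, (z i.castSucc - z i.succ)⁻¹) *
          (z (Fin.last len) - B)⁻¹ =
        G 0 (z 0) * chainKernel (fun k => G (k + 1)) B len (z 0) (Fin.tail z)
  | 0, z => by simp [chainKernel]
  | len + 1, z => by
    have ih := prod_mul_prod_inv_sub_eq_chainKernel (fun k => G (k + 1)) B len (Fin.tail z)
    rw [Fin.prod_univ_succ (n := len + 1),
      Fin.prod_univ_succ fun i : Fin (len + 1) => (z i.castSucc - z i.succ)⁻¹, chainKernel,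
      mul_assoc (_ - _)⁻¹, ← ih]
    simp only [Fin.tail, Fin.val_succ, Fin.succ_castSucc, Fin.succ_last, Fin.castSucc_zero,
      Fin.val_zero, Nat.succ_eq_add_one]
    ring

theorem prod_Icc_one_eq_prod_fin {M : Type*} [CommMonoid M] (f : ℕ → M) (d : ℕ) :
    ∏ k ∈ Finset.Icc 1 d, f k = ∏ i : Fin d, f (i + 1) := by
  rw [Fin.prod_univ_eq_prod_range (fun i => f (i + 1)), Finset.range_eq_Ico,
    Finset.prod_Ico_add' f, zero_add]
  rfl

theorem fext_val_add_one {d : ℕ} {α : Type*} [Zero α] (x : Fin d → α) (i : Fin d) :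
    fext x (i + 1) = x i :=
  dif_pos ⟨by omega, i.2⟩

theorem prod_fext_mul_inv_sub_eq_chainKernel (G : ℕ → ℂ → ℂ) (B : ℂ) (len : ℕ)
    (x : Fin (len + 1) → ℂ) :
    (∏ k ∈ Finset.Icc 1 (len + 1), G k (fext x k)) *
        (∏ k ∈ Finset.Icc 1 len, (fext x k - fext x (k + 1))⁻¹) * (fext x (len + 1) - B)⁻¹ =
      G 1 (x 0) * chainKernel (fun k => G (k + 2)) B len (x 0) (Fin.tail x) := by
  have hlast : fext x (len + 1) = x (Fin.last len) := fext_val_add_one x (Fin.last len)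
  have hcast : ∀ i : Fin len, fext x (i + 1) = x i.castSucc :=
    fun i => fext_val_add_one x i.castSucc
  have hsucc : ∀ i : Fin len, fext x (i + 1 + 1) = x i.succ :=
    fun i => fext_val_add_one x i.succ
  simp only [prod_Icc_one_eq_prod_fin, fext_val_add_one, hcast, hsucc, hlast]
  exact prod_mul_prod_inv_sub_eq_chainKernel (fun k => G (k + 1)) B len x

theorem exists_one_then_two {p : ℕ} (hp : 1 ≤ p) {e : ℕ → ℕ}
    (he : ∀ k ∈ Finset.Icc 1 (p - 1), e k = 1 ∨ e k = 2)
    (hne : ¬ ∃ k ∈ Finset.Icc 1 p, ∀ t ∈ Finset.Icc 1 (p - 1), e t = if t < k then 2 else 1) :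
    ∃ s, s + 3 ≤ p ∧ e (s + 1) = 1 ∧ e (s + 2) = 2 := by
  by_contra! hno
  classical
  have hex : ∃ k, 1 ≤ k ∧ (k = p ∨ e k = 1) := ⟨p, hp, .inl rfl⟩
  obtain ⟨hk1, hk⟩ := Nat.find_spec hex
  have hkp : Nat.find hex ≤ p := Nat.find_min' hex ⟨hp, .inl rfl⟩
  refine hne ⟨Nat.find hex, Finset.mem_Icc.2 ⟨hk1, hkp⟩, fun t ht => ?_⟩
  obtain ⟨ht1, htp⟩ := Finset.mem_Icc.1 ht
  have hone : ∀ u, Nat.find hex ≤ u → u ≤ p - 1 → e u = 1 := by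
    intro u hu
    induction u, hu using Nat.le_induction with
    | base => exact fun _ => hk.resolve_left (by omega)
    | succ u hu ih =>
      intro hup
      obtain ⟨s, rfl⟩ : ∃ s, u = s + 1 := ⟨u - 1, by omega⟩
      exact (he (s + 2) (Finset.mem_Icc.2 ⟨by omega, hup⟩)).resolve_right
        (hno s (by omega) (ih (by omega)))
  split_ifs with htk
  · exact (he t ht).resolve_left fun h => Nat.find_min hex htk ⟨ht1, .inr h⟩
  · exact hone t (not_lt.1 htk) htp

theorem one_sub_sqrt_le_abs_one_sub (q : ℝ) : 1 - √q ≤ |1 - q| := by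
  rcases lt_or_ge q 0 with hq | hq
  · rw [Real.sqrt_eq_zero'.2 hq.le, abs_of_pos (by linarith)]
    linarith
  · have hsq := Real.sq_sqrt hq
    rcases le_or_gt √q 1 with hs | hs
    · exact (le_abs_self _).trans' (by nlinarith [Real.sqrt_nonneg q])
    · exact (abs_nonneg _).trans' (by linarith)

theorem differentiableOn_Gstar (q : ℝ) {n : ℤ} (hn : 0 ≤ n) (m a : ℤ) :
    DifferentiableOn ℂ (Gstar q n m a) (ball 0 (1 - √q)) := by
  intro w hw
  rw [mem_ball_zero_iff] at hw
  have h1 : (1 : ℂ) - w ≠ 0 := by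
    rw [sub_ne_zero]
    rintro rfl
    simp only [norm_one] at hw
    linarith [Real.sqrt_nonneg q]
  have h2 : (1 : ℂ) - w / (1 - q) ≠ 0 := by
    intro h
    have hq : (1 : ℂ) - q ≠ 0 := by
      rintro hq
      simp [hq] at h
    have hw' : w = ((1 - q : ℝ) : ℂ) := by
      push_cast
      field_simp at h
      linear_combination -h
    rw [hw', Complex.norm_real, Real.norm_eq_abs] at hw
    linarith [one_sub_sqrt_le_abs_one_sub q]
  refine DifferentiableAt.differentiableWithinAt (DifferentiableAt.div ?_ ?_ (zpow_ne_zero _ h2))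
  · exact (differentiableAt_zpow.2 (.inr hn)).mul
      (((differentiableAt_const _).sub differentiableAt_id).zpow (.inl h1))
  · exact ((differentiableAt_const _).sub (differentiableAt_id.div_const _)).zpow (.inl h2)

theorem differentiableOn_Gfun (q : ℝ) {n : ℤ} (hn : 0 ≤ n) (m a : ℤ) :
    DifferentiableOn ℂ (Gfun q n m a) (ball 0 (1 - √q)) :=
  (differentiableOn_Gstar q hn m a).div_const _

theorem Ldelta_zero_eq_zero_of_chainKernel {q : ℝ} {p : ℕ} {n m : ℕ → ℕ} {a : ℕ → ℤ}
    {τ1 τ2 : ℝ} {ρ : ℕ → ℝ} (i j : ℕ) (hτ2 : 0 ≤ τ2) (hρ1 : 0 ≤ ρ 1)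
    (h : ∀ ζ ∈ sphere (0 : ℂ) τ2, ∀ z ∈ sphere (0 : ℂ) (ρ 1),
      multiCintC p (fun _ => 0) (fun k => ρ (k.1 + 2))
        (chainKernel (fun k => Gfun q ((n (k + 2) : ℤ) - n (k + 1))
          ((m (k + 2) : ℤ) - m (k + 1)) (a (k + 2) - a (k + 1))) ζ p z) = 0) :
    Ldelta q (p + 1) n m a τ1 τ2 (fun _ => 0) ρ i j = 0 := by
  unfold Ldelta
  refine (congrArg (cint 0 τ1) (funext fun ζ1 => ?_)).trans cint_zero
  refine cint_eq_zero_of_eqOn_zero hτ2 fun ζ2 hζ2 => ?_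
  simp only [zero_ne_one, if_false, multiCintC]
  refine cint_eq_zero_of_eqOn_zero hρ1 fun z hz => ?_
  have hsplit : ∀ P X Y U W : ℂ, P * X / (Y * (U * W)) = X / (Y * U) * (P * W⁻¹) :=
    fun _ _ _ _ _ => by ring
  have hfext1 : ∀ w : Fin p → ℂ, fext (Fin.cons z w : Fin (p + 1) → ℂ) 1 = z :=
    fun w => fext_val_add_one _ 0
  simp only [hsplit, Nat.add_sub_cancel, prod_fext_mul_inv_sub_eq_chainKernel, hfext1,
    Fin.cons_zero, Fin.tail_cons, multiCintC_const_mul]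
  exact mul_eq_zero_of_right _ (mul_eq_zero_of_right _ (h ζ2 hζ2 z hz))

theorem statement10_general
    (q : ℝ)
    (p N : ℕ) (hp : 2 ≤ p)
    (n : ℕ → ℕ)
    (hnmono : ∀ k ∈ Finset.Icc 1 (p - 1), n k < n (k + 1))
    (m : ℕ → ℕ)
    (a : ℕ → ℤ)
    (e : ℕ → ℕ) (he : ∀ k ∈ Finset.Icc 1 (p - 1), e k = 1 ∨ e k = 2)
    (τ1 τ2 : ℝ) (hτ2 : 0 < τ2) (hτ21 : τ2 < τ1)
    (ρ : ℕ → ℝ) (hρ : ∀ k ∈ Finset.Icc 1 p, τ1 < ρ k ∧ ρ k < 1 - Real.sqrt q)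
    (hρord : ∀ k ∈ Finset.Icc 1 (p - 1),
      (e k = 2 → ρ k < ρ (k + 1)) ∧ (e k = 1 → ρ (k + 1) < ρ k))
    (hne : ¬ ∃ k ∈ Finset.Icc 1 p,
      ∀ t ∈ Finset.Icc 1 (p - 1), e t = if t < k then 2 else 1) :
    ∀ i j : ℕ, 1 ≤ i → i ≤ N → 1 ≤ j → j ≤ N →
      Ldelta q p n m a τ1 τ2 (fun _ => 0) ρ i j = 0 := by
  intro i j _ _ _ _
  obtain ⟨s, hsp, hes1, hes2⟩ := exists_one_then_two (by omega) he hne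
  obtain ⟨p, rfl⟩ : ∃ p', p = p' + 1 := ⟨p - 1, by omega⟩
  have hτ1 : 0 < τ1 := hτ2.trans hτ21
  have hρ' : ∀ k < p + 1, τ1 < ρ (k + 1) ∧ ρ (k + 1) < 1 - √q :=
    fun k hk => hρ (k + 1) (Finset.mem_Icc.2 ⟨by omega, by omega⟩)
  have hIcc : ∀ k < p, k + 1 ∈ Finset.Icc 1 (p + 1 - 1) :=
    fun k hk => Finset.mem_Icc.2 ⟨by omega, by omega⟩
  have hadj : ∀ k < p, ρ (k + 1) ≠ ρ (k + 2) := fun k hk =>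
    (he _ (hIcc k hk)).elim (fun h => ((hρord _ (hIcc k hk)).2 h).ne')
      (fun h => ((hρord _ (hIcc k hk)).1 h).ne)
  have hG : ∀ k < p, DifferentiableOn ℂ (Gfun q ((n (k + 2) : ℤ) - n (k + 1))
      ((m (k + 2) : ℤ) - m (k + 1)) (a (k + 2) - a (k + 1))) (ball 0 (1 - √q)) :=
    fun k hk =>
      differentiableOn_Gfun q (sub_nonneg.2 (Nat.cast_le.2 (hnmono _ (hIcc k hk)).le)) _ _
  refine Ldelta_zero_eq_zero_of_chainKernel i j hτ2.le (hτ1.trans (hρ' 0 (by omega)).1).le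
    fun ζ hζ z hz => ?_
  refine multiCintC_chainKernel_eq_zero ζ s p _ (fun k => ρ (k + 1)) z (by omega)
    (mem_sphere_zero_iff_norm.1 hz) ((hρord _ (hIcc s (by omega))).2 hes1)
    ((hρord _ (hIcc (s + 1) (by omega))).1 hes2)
    (fun k hk => (hτ1.trans (hρ' (k + 1) (by omega)).1).le) hadj ?_
    (fun k hk => (hG k hk).continuousOn.mono (sphere_subset_ball (hρ' (k + 1) (by omega)).2))
    ((hG s (by omega)).mono (closedBall_subset_ball (hρ' (s + 1) (by omega)).2))
  rw [mem_sphere_zero_iff_norm.1 hζ]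
  exact (hτ21.trans (hρ' p (by omega)).1).ne'

/-- (Lemma `lem:deltazero` of the paper.)  For `δ ≡ 0` (all
`z`-contours around the origin, radii in `(τ_1, 1−√q)` ordered according to `ε`),
the kernel `L^ε_δ` vanishes identically unless `ε = ε^k = (2,…,2,1,…,1)` for some
`1 ≤ k ≤ p`. -/
theorem statement10
    (q : ℝ) (hq0 : 0 < q) (hq1 : q < 1)
    (p N : ℕ) (hp : 2 ≤ p)
    (n : ℕ → ℕ) (hn0 : n 0 = 0) (hn1 : 1 ≤ n 1)
    (hnmono : ∀ k ∈ Finset.Icc 1 (p - 1), n k < n (k + 1)) (hnp : n p = N)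
    (m : ℕ → ℕ) (hm0 : m 0 = 0) (hm1 : 0 < m 1)
    (hmmono : ∀ k ∈ Finset.Icc 1 (p - 1), m k < m (k + 1))
    (a : ℕ → ℤ) (ha0 : a 0 = 0)
    (e : ℕ → ℕ) (he : ∀ k ∈ Finset.Icc 1 (p - 1), e k = 1 ∨ e k = 2)
    (τ1 τ2 : ℝ) (hτ2 : 0 < τ2) (hτ21 : τ2 < τ1) (hτ1 : τ1 < 1 - Real.sqrt q)
    (ρ : ℕ → ℝ) (hρ : ∀ k ∈ Finset.Icc 1 p, τ1 < ρ k ∧ ρ k < 1 - Real.sqrt q)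
    (hρord : ∀ k ∈ Finset.Icc 1 (p - 1),
      (e k = 2 → ρ k < ρ (k + 1)) ∧ (e k = 1 → ρ (k + 1) < ρ k))
    (hne : ¬ ∃ k ∈ Finset.Icc 1 p,
      ∀ t ∈ Finset.Icc 1 (p - 1), e t = if t < k then 2 else 1) :
    ∀ i j : ℕ, 1 ≤ i → i ≤ N → 1 ≤ j → j ≤ N →
      Ldelta q p n m a τ1 τ2 (fun _ => 0) ρ i j = 0 :=
  statement10_general q p N hp n hnmono m a e he τ1 τ2 hτ2 hτ21 ρ hρ hρord hne

end
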